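/- Braid relation for the dual-configuration operators: for any tuple of queues q = (q_1,...,q_k) and any i ∈ {1,...,k−2}, one has s_i s_{i+1} s_i q = s_{i+1} s_i s_{i+1} q, where s_i replaces the adjacent pair (q_i, q_{i+1}) by its dual configuration. Consequently, together with s_i² = id and commutation for |i−j| > 1, the maps s_i define an action of the symmetric group S_k on k-tuples of queues. -/

import Mathlib

open scoped BigOperators Classical

namespace MLQ

/-- Words of length `n` over the positive integers (letters are natural numbers,
with `0` unused). Sites are elements of `Fin n`, thought of cyclically. -/
abbrev Word (n : ℕ) := Fin n → ℕ

variable {n : ℕ}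

section Cyclic

variable [NeZero n]

/-- the site `s` steps (cyclically) to the right of `i` -/
def shiftR (i : Fin n) (s : ℕ) : Fin n :=
  ⟨(i.val + s) % n, Nat.mod_lt _ (Nat.pos_of_ne_zero (NeZero.ne n))⟩

/-- the site `s` steps (cyclically) to the left of `i` -/
def shiftL (i : Fin n) (s : ℕ) : Fin n :=
  ⟨(i.val + n - s % n) % n, Nat.mod_lt _ (Nat.pos_of_ne_zero (NeZero.ne n))⟩

/-- number of steps to go (cyclically) right from `i` to `j` -/
def cdistR (i j : Fin n) : ℕ := (j.val + n - i.val) % n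

/-- number of steps to go (cyclically) left from `i` to `j` -/
def cdistL (i j : Fin n) : ℕ := (i.val + n - j.val) % n

/-- first site of `s` weakly to the right (cyclically) of `i` -/
noncomputable def firstRight (i : Fin n) (s : Finset (Fin n)) (h : s.Nonempty) : Fin n :=
  shiftR i ((s.image (cdistR i)).min' (h.image _))

/-- first site of `s` weakly to the left (cyclically) of `i` -/
noncomputable def firstLeft (i : Fin n) (s : Finset (Fin n)) (h : s.Nonempty) : Fin n :=
  shiftL i ((s.image (cdistL i)).min' (h.image _))

/-- One step of Phase II of the queue algorithm: the state consists of the set of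
still-unset sites of the queue together with the partial output word; processing
the letter at site `σ p`, it is placed (unchanged) on the first unset queue site
weakly to the right of `σ p`. -/
noncomputable def step2 (u : Word n) (σ : Equiv.Perm (Fin n))
    (st : Finset (Fin n) × Word n) (p : Fin n) : Finset (Fin n) × Word n :=
  if h : st.1.Nonempty then
    let j := firstRight (σ p) st.1 h
    (st.1.erase j, Function.update st.2 j (u (σ p)))
  else st

/-- One step of Phase I of the queue algorithm: processing the letter at site `σ p`,
the letter `u (σ p) + 1` is placed on the first unset non-queue site weakly to the
left of `σ p`. -/
noncomputable def step1 (u : Word n) (σ : Equiv.Perm (Fin n))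
    (st : Finset (Fin n) × Word n) (p : Fin n) : Finset (Fin n) × Word n :=
  if h : st.1.Nonempty then
    let j := firstLeft (σ p) st.1 h
    (st.1.erase j, Function.update st.2 j (u (σ p) + 1))
  else st

/-- The two-phase queue algorithm computing `q(u)`, using the ordering permutation `σ`
(so the letters are processed in the order `u (σ 0), u (σ 1), …`): Phase II processes
the `|q|` smallest letters in increasing order, Phase I processes the remaining
letters in decreasing order. -/
noncomputable def queueActWith (q : Finset (Fin n)) (σ : Equiv.Perm (Fin n))
    (u : Word n) : Word n :=
  let s2 := ((List.finRange n).take q.card).foldl (step2 u σ) (q, fun _ => 0)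
  let s1 := (((List.finRange n).drop q.card).reverse).foldl (step1 u σ) (qᶜ, s2.2)
  s1.2

/-- `σ` is a valid ordering permutation for the word `u`. -/
def IsSorting (u : Word n) (σ : Equiv.Perm (Fin n)) : Prop := Monotone (u ∘ σ)

/-- The action `q(u)` of a queue `q` on a word `u`, using the canonical sorting
permutation. -/
noncomputable def act (q : Finset (Fin n)) (u : Word n) : Word n :=
  queueActWith q (Tuple.sort u) u

/-- The action of a tuple of queues `(q_1, …, q_k)` on a word (first `q_1`, then `q_2`, …). -/
noncomputable def mlqAct {k : ℕ} (qs : Fin k → Finset (Fin n)) (u : Word n) : Word n :=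
  (List.ofFn qs).foldl (fun w q => act q w) u

end Cyclic

/-- the type of a word: `typeOf u i` is the number of occurrences of the letter `i`. -/
def typeOf (u : Word n) : ℕ → ℕ := fun i => (Finset.univ.filter (fun p => u p = i)).card

/-- partial sums `p_i(m) = m_1 + ⋯ + m_i` of a type -/
def psum (m : ℕ → ℕ) (i : ℕ) : ℕ := ∑ j ∈ Finset.Icc 1 i, m j

/-- number of classes of a type: the largest `i` with `m i ≠ 0` -/
noncomputable def classes (m : ℕ → ℕ) : ℕ := sSup {i | m i ≠ 0}

/-- a packed word: all classes `1, …, ℓ` occur, where `ℓ` is the number of classes -/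
def PackedWord (u : Word n) : Prop :=
  (∀ p, 1 ≤ u p) ∧ ∀ j, 1 ≤ j → j ≤ classes (typeOf u) → typeOf u j ≠ 0

/-- merging classes `i` and `i+1` in a word: all letters `> i` are decremented -/
def mergeWord (i : ℕ) (u : Word n) : Word n := fun p => if i < u p then u p - 1 else u p

/-- merging classes `i` and `i+1` in a type -/
def mergeType (i : ℕ) (m : ℕ → ℕ) : ℕ → ℕ := fun j =>
  if j < i then m j else if j = i then m i + m (i + 1) else m (j + 1)

/-- `∨^(k)`: decrement all but the `k` smallest letters of a word (meaningful when
`k` is a partial sum of the type of the word). -/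
def vee (k : ℕ) (u : Word n) : Word n := fun p =>
  if (Finset.univ.filter (fun q => u q ≤ u p)).card ≤ k then u p else u p - 1

/-- iterated merge `∨_T` (the merges `∨_t` are applied for `t ∈ T` in decreasing order) -/
def mergeWordT (T : Finset ℕ) (u : Word n) : Word n :=
  (T.sort (· ≤ ·)).foldr mergeWord u

/-- iterated merge `∨_T` on types -/
def mergeTypeT (T : Finset ℕ) (m : ℕ → ℕ) : ℕ → ℕ :=
  (T.sort (· ≤ ·)).foldr mergeType m

/-- the weight of a queue, `∏_{j ∈ q} x_j` -/
noncomputable def qwt (q : Finset (Fin n)) : MvPolynomial (Fin n) ℤ :=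
  ∏ j ∈ q, MvPolynomial.X j

/-- the `σ`-twisted spectral weight `⟨u⟩_σ` of a word `u`, with respect to a type `m`
with `k + 1` classes: the sum of the weights of all `σ`-twisted multiline queues
`(q_1, …, q_k)` of type `m` (i.e. `|q_i| = p_{σ(i)}(m)`) with `u = q(1^n)`. -/
noncomputable def swt [NeZero n] (k : ℕ) (m : ℕ → ℕ) (σ : Equiv.Perm (Fin k))
    (u : Word n) : MvPolynomial (Fin n) ℤ :=
  ∑ qs ∈ Finset.univ.filter (fun qs : Fin k → Finset (Fin n) =>
      (∀ i, (qs i).card = psum m ((σ i : ℕ) + 1)) ∧ mlqAct qs (fun _ => 1) = u),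
    ∏ i, qwt (qs i)

/-- the (ordinary) spectral weight `⟨u⟩` of a packed word -/
noncomputable def spec [NeZero n] (u : Word n) : MvPolynomial (Fin n) ℤ :=
  swt (classes (typeOf u) - 1) (typeOf u) (Equiv.refl _) u

/-- the elementary symmetric polynomial `e_k(x_1, …, x_n)` -/
noncomputable def esym (n k : ℕ) : MvPolynomial (Fin n) ℤ :=
  ∑ t ∈ Finset.powersetCard k (Finset.univ : Finset (Fin n)), ∏ j ∈ t, MvPolynomial.X j

/-- the Gale order `A ⪰ B`: same cardinality, and the `k`-th largest element of `A`
is at least the `k`-th largest element of `B`, for every `k` -/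
def Dom (A B : Finset ℕ) : Prop :=
  A.card = B.card ∧ ∀ k < A.card,
    (B.sort (· ≤ ·)).reverse.getD k 0 ≤ (A.sort (· ≤ ·)).reverse.getD k 0

/-- `A ≫ B`: every element of `A` exceeds every element of `B` -/
def Gg (A B : Finset ℕ) : Prop := ∀ a ∈ A, ∀ b ∈ B, b < a

/-- a word is weakly decreasing up to level `t`: any two sites `p < q` with
`u q ≤ t` satisfy `u p ≥ u q` -/
def WDUpTo (t : ℕ) (u : Word n) : Prop :=
  ∀ p q : Fin n, p < q → u q ≤ t → u q ≤ u p

section Dual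

variable [NeZero n]

/-- the cyclic interval `{i, i+1, …, i+t}` -/
def cycInterval (i : Fin n) (t : ℕ) : Finset (Fin n) :=
  (Finset.range (t + 1)).image (shiftR i)

/-- the cyclic interval starting at `i` of length `t` is balanced for the
configuration `(q₁, q₂)` -/
def BalancedInterval (q1 q2 : Finset (Fin n)) (i : Fin n) (t : ℕ) : Prop :=
  (cycInterval i t ∩ q1).card = (cycInterval i t ∩ q2).card ∧
  ∀ l ≤ t, (cycInterval i l ∩ q2).card ≤ (cycInterval i l ∩ q1).card

/-- a site is balanced if it lies in some balanced interval; equivalently, its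
parenthesis (if any) is matched in the cyclic parenthesis-matching of the
configuration -/
def BalancedSite (q1 q2 : Finset (Fin n)) (j : Fin n) : Prop :=
  ∃ i t, t < n ∧ BalancedInterval q1 q2 i t ∧ j ∈ cycInterval i t

/-- the dual configuration: balanced sites keep their memberships, unbalanced
sites swap their memberships between the two queues -/
noncomputable def dualPair (q1 q2 : Finset (Fin n)) : Finset (Fin n) × Finset (Fin n) :=
  (Finset.univ.filter (fun j => if BalancedSite q1 q2 j then j ∈ q1 else j ∈ q2),
   Finset.univ.filter (fun j => if BalancedSite q1 q2 j then j ∈ q2 else j ∈ q1))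

/-- the operator `s_i` on tuples of queues, replacing the (0-indexed) adjacent pair
`(q_i, q_{i+1})` by its dual configuration -/
noncomputable def sOp {k : ℕ} (i : ℕ) (qs : Fin k → Finset (Fin n)) :
    Fin k → Finset (Fin n) := fun j =>
  if h : i + 1 < k then
    (if j.val = i then (dualPair (qs ⟨i, by omega⟩) (qs ⟨i + 1, h⟩)).1
     else if j.val = i + 1 then (dualPair (qs ⟨i, by omega⟩) (qs ⟨i + 1, h⟩)).2
     else qs j)
  else qs j

end Dual

/-!
Unroll the cycle onto `ℕ`. A pair of queues `(X, Y)` becomes the lattice path `height X Y`,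
stepping up at `X`-only sites and down at `Y`-only sites, with drift `|X| - |Y|` per period; let
`K` be its minimum over windows of one period. `K` moves exactly at the unbalanced sites, and there
by the step of the path, so the dual pair has rows `1_X - ΔK` and `1_Y + ΔK`. On counting
functions `a`, `b` (increments `1_X`, `1_Y`) the dual is therefore the tropical map
`(a, b) ↦ (a - K (a - b), b + K (a - b))`. For nonnegative drift `K` is the future minimum, and
the braid relation of these maps comes down to the min-plus identity `windowMin_add_windowMin`,
applied to the two consecutive height functions in both orders.
-/

def QuasiPeriodic (n : ℕ) (d : ℤ) (F : ℕ → ℤ) : Prop := ∀ t, F (t + n) = F t + d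

def windowMin (n : ℕ) (F : ℕ → ℤ) (t : ℕ) : ℤ :=
  (Finset.range (n + 1)).inf' Finset.nonempty_range_add_one (fun u => F (t + u))

section WindowMin

variable {d e c : ℤ} {F G : ℕ → ℤ} {s t : ℕ}

theorem QuasiPeriodic.add (hF : QuasiPeriodic n d F) (hG : QuasiPeriodic n e G) :
    QuasiPeriodic n (d + e) (F + G) := fun t => by
  simp only [Pi.add_apply, hF t, hG t]; ring

theorem windowMin_le (h₁ : t ≤ s) (h₂ : s ≤ t + n) : windowMin n F t ≤ F s := by
  have := Finset.inf'_le (fun u => F (t + u)) (Finset.mem_range.2 (show s - t < n + 1 by omega))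
  rwa [Nat.add_sub_cancel' h₁] at this

theorem exists_windowMin_eq (F : ℕ → ℤ) (t : ℕ) :
    ∃ s, t ≤ s ∧ s ≤ t + n ∧ windowMin n F t = F s := by
  obtain ⟨u, hu, h⟩ :=
    Finset.exists_mem_eq_inf' Finset.nonempty_range_add_one (fun u => F (t + u))
  exact ⟨t + u, by omega, by simp at hu; omega, h⟩

theorem windowMin_add_right (F : ℕ → ℤ) (t m : ℕ) :
    windowMin n F (t + m) = windowMin n (fun s => F (s + m)) t := by
  simp only [windowMin, Nat.add_right_comm]

theorem windowMin_eq_add_of_eq_add (h : ∀ s, G s = F s + c) (t : ℕ) :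
    windowMin n G t = windowMin n F t + c := by
  obtain ⟨s, hs₁, hs₂, hs⟩ := exists_windowMin_eq (n := n) F t
  obtain ⟨s', hs₁', hs₂', hs'⟩ := exists_windowMin_eq (n := n) G t
  have := windowMin_le (F := G) hs₁ hs₂
  have := windowMin_le (F := F) hs₁' hs₂'
  linarith [h s, h s']

theorem quasiPeriodic_windowMin (hF : QuasiPeriodic n d F) : QuasiPeriodic n d (windowMin n F) :=
  fun t => by rw [windowMin_add_right]; exact windowMin_eq_add_of_eq_add hF t

variable [NeZero n]

theorem QuasiPeriodic.windowMin_le_of_le (hF : QuasiPeriodic n d F) (hd : 0 ≤ d) (h : t ≤ s) :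
    windowMin n F t ≤ F s := by
  induction s using Nat.strong_induction_on with
  | _ s ih =>
    by_cases hs : s ≤ t + n
    · exact windowMin_le h hs
    · have := hF (s - n)
      rw [Nat.sub_add_cancel (by omega)] at this
      linarith [ih (s - n) (by have := NeZero.pos n; omega) (by omega)]

theorem QuasiPeriodic.le_windowMin_iff (hF : QuasiPeriodic n d F) (hd : 0 ≤ d) :
    c ≤ windowMin n F t ↔ ∀ s, t ≤ s → c ≤ F s := by
  refine ⟨fun h s hs => h.trans (hF.windowMin_le_of_le hd hs), fun h => ?_⟩
  obtain ⟨s, hs, -, he⟩ := exists_windowMin_eq (n := n) F t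
  exact he ▸ h s hs

theorem QuasiPeriodic.windowMin_mono (hF : QuasiPeriodic n d F) (hd : 0 ≤ d) (h : t ≤ s) :
    windowMin n F t ≤ windowMin n F s :=
  (hF.le_windowMin_iff hd).2 fun _ hr => hF.windowMin_le_of_le hd (h.trans hr)

theorem QuasiPeriodic.windowMin_succ_le (hF : QuasiPeriodic n d F) (hd : d ≤ 0) (t : ℕ) :
    windowMin n F (t + 1) ≤ windowMin n F t := by
  have hFn : F (t + n) ≤ F t := by linarith [hF t]
  have := NeZero.pos n
  obtain ⟨s, hs₁, hs₂, hs⟩ := exists_windowMin_eq (n := n) F t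
  rcases Nat.eq_or_lt_of_le hs₁ with rfl | hlt
  · exact hs ▸ (windowMin_le (by omega) (by omega)).trans hFn
  · exact hs ▸ windowMin_le (by omega) (by omega)

theorem QuasiPeriodic.windowMin_succ_sub_of_nonneg (hF : QuasiPeriodic n d F) (hd : 0 ≤ d)
    (hstep : ∀ s, F (s + 1) ≤ F s + 1) (t : ℕ) :
    windowMin n F (t + 1) - windowMin n F t =
      if ∀ u, 1 ≤ u → u ≤ n → F t < F (t + u) then 1 else 0 := by
  have hpos := NeZero.pos n
  have hK₁ : windowMin n F (t + 1) ≤ F (t + 1) := windowMin_le le_rfl (by omega)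
  have hK₀ : windowMin n F t ≤ F t := windowMin_le le_rfl (by omega)
  obtain ⟨s, hs₁, hs₂, hs⟩ := exists_windowMin_eq (n := n) F t
  obtain ⟨s', hs₁', hs₂', hs'⟩ := exists_windowMin_eq (n := n) F (t + 1)
  split_ifs with h
  · have hlt : F t < F s' := by
      rcases Nat.lt_or_ge (t + n) s' with h' | h'
      · have := hF (t + 1)
        rw [show t + 1 + n = s' by omega] at this
        linarith [h 1 le_rfl hpos]
      · simpa [Nat.add_sub_cancel' (by omega : t ≤ s')] using h (s' - t) (by omega) (by omega)
    have hs0 : s = t := by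
      by_contra hne
      have := h (s - t) (by omega) (by omega)
      rw [Nat.add_sub_cancel' hs₁] at this
      linarith
    rw [hs0] at hs
    have := hstep t
    omega
  · push Not at h
    obtain ⟨u, hu₁, hu₂, hu⟩ := h
    have hle : windowMin n F (t + 1) ≤ windowMin n F t := by
      rcases Nat.eq_or_lt_of_le hs₁ with rfl | hlt
      · exact hs ▸ (windowMin_le (by omega) (by omega)).trans hu
      · exact hs ▸ windowMin_le (by omega) (by omega)
    have := hF.windowMin_mono hd (Nat.le_add_right t 1)
    omega

theorem QuasiPeriodic.windowMin_succ_sub_of_nonpos (hF : QuasiPeriodic n d F) (hd : d ≤ 0)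
    (hstep : ∀ s, F s - 1 ≤ F (s + 1)) (t : ℕ) :
    windowMin n F (t + 1) - windowMin n F t =
      if ∀ u, 1 ≤ u → u ≤ n → F (t + n + 1) < F (t + n + 1 - u) then -1 else 0 := by
  have hpos := NeZero.pos n
  have hFn : F (t + n) ≤ F t := by linarith [hF t]
  obtain ⟨s, hs₁, hs₂, hs⟩ := exists_windowMin_eq (n := n) F t
  obtain ⟨s', hs₁', hs₂', hs'⟩ := exists_windowMin_eq (n := n) F (t + 1)
  have hle := hF.windowMin_succ_le hd t
  split_ifs with h
  · have hlast : windowMin n F (t + 1) = F (t + n + 1) := by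
      refine le_antisymm (windowMin_le (by omega) (by omega)) (hs' ▸ ?_)
      rcases Nat.eq_or_lt_of_le hs₂' with h' | h'
      · rw [h', Nat.add_right_comm]
      · have := h (t + n + 1 - s') (by omega) (by omega)
        rw [Nat.sub_sub_self (by omega)] at this
        exact this.le
    have hlt : F (t + n + 1) < F s := by
      rcases Nat.eq_or_lt_of_le hs₁ with rfl | hlt
      · have := h 1 le_rfl hpos
        simp only [Nat.add_sub_cancel] at this
        linarith
      · have := h (t + n + 1 - s) (by omega) (by omega)
        rwa [Nat.sub_sub_self (by omega)] at this
    have hK := windowMin_le (n := n) (F := F) (t := t) (s := t + n) (by omega) le_rfl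
    have := hstep (t + n)
    omega
  · push Not at h
    obtain ⟨u, hu₁, hu₂, hu⟩ := h
    have hK : windowMin n F t ≤ F (t + n + 1) :=
      (windowMin_le (by omega) (by omega)).trans hu
    have hge : windowMin n F t ≤ windowMin n F (t + 1) := by
      rcases Nat.eq_or_lt_of_le hs₂' with h' | h'
      · rw [hs', h', Nat.add_right_comm]; exact hK
      · exact hs' ▸ windowMin_le (by omega) (by omega)
    omega

end WindowMin

section Height

variable [NeZero n]

def ind (q : Finset (Fin n)) (t : ℕ) : ℤ := if Fin.ofNat n t ∈ q then 1 else 0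

def height (X Y : Finset (Fin n)) (t : ℕ) : ℤ := ∑ s ∈ Finset.range t, (ind X s - ind Y s)

variable {X Y : Finset (Fin n)} {t : ℕ}

theorem ind_val (q : Finset (Fin n)) (j : Fin n) : ind q j = if j ∈ q then 1 else 0 := by
  simp [ind]

theorem ind_congr (q : Finset (Fin n)) {a b : ℕ} (h : a % n = b % n) : ind q a = ind q b := by
  simp only [ind, Fin.ofNat, h]

theorem ind_add_n (q : Finset (Fin n)) (t : ℕ) : ind q (t + n) = ind q t :=
  ind_congr q (Nat.add_mod_right t n)

theorem ind_eq_zero_or_one (q : Finset (Fin n)) (t : ℕ) : ind q t = 0 ∨ ind q t = 1 := by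
  unfold ind; split_ifs <;> simp

theorem sum_range_ind (q : Finset (Fin n)) : ∑ s ∈ Finset.range n, ind q s = q.card := by
  rw [← Fin.sum_univ_eq_sum_range (ind q)]
  simp [ind_val]

theorem eq_of_ind_eq (h : ∀ t, ind X t = ind Y t) : X = Y := by
  ext j
  have := h j
  rw [ind_val, ind_val] at this
  split_ifs at this <;> simp_all

theorem height_zero : height X Y 0 = 0 := by simp [height]

theorem height_succ : height X Y (t + 1) = height X Y t + (ind X t - ind Y t) :=
  Finset.sum_range_succ _ _

theorem height_add (x c : ℕ) :
    height X Y (x + c) = height X Y x + ∑ s ∈ Finset.range c, (ind X (x + s) - ind Y (x + s)) :=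
  Finset.sum_range_add _ _ _

theorem height_succ_le : height X Y (t + 1) ≤ height X Y t + 1 := by
  rw [height_succ]
  have := ind_eq_zero_or_one X t
  have := ind_eq_zero_or_one Y t
  omega

theorem sub_one_le_height_succ : height X Y t - 1 ≤ height X Y (t + 1) := by
  rw [height_succ]
  have := ind_eq_zero_or_one X t
  have := ind_eq_zero_or_one Y t
  omega

theorem quasiPeriodic_height : QuasiPeriodic n (X.card - Y.card) (height X Y) := by
  intro t
  induction t with
  | zero => simp [height, Finset.sum_sub_distrib, sum_range_ind]
  | succ t ih => rw [Nat.add_right_comm, height_succ, ih, height_succ, ind_add_n, ind_add_n]; ring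

theorem height_add_sub_congr {x y : ℕ} (h : x % n = y % n) (c : ℕ) :
    height X Y (x + c) - height X Y x = height X Y (y + c) - height X Y y := by
  simp only [height_add, add_sub_cancel_left]
  refine Finset.sum_congr rfl fun s _ => ?_
  rw [ind_congr X (Nat.ModEq.add_right s h), ind_congr Y (Nat.ModEq.add_right s h)]

theorem windowMin_height_sub_congr {a b : ℕ} (h : a % n = b % n) :
    windowMin n (height X Y) a - height X Y a = windowMin n (height X Y) b - height X Y b := by
  have key : ∀ x, windowMin n (height X Y) x - height X Y x =
      windowMin n (fun u => height X Y (x + u) - height X Y x) 0 := fun x => by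
    rw [windowMin_eq_add_of_eq_add (G := fun u => height X Y (x + u) - height X Y x)
      (F := fun u => height X Y (x + u)) (c := -height X Y x) (fun _ => by ring)]
    simp [windowMin, sub_eq_add_neg]
  rw [key, key]
  congr 1
  funext u
  exact height_add_sub_congr h u

end Height

def IsExcursion (F : ℕ → ℤ) (x m : ℕ) : Prop := F (x + m) = F x ∧ ∀ l ≤ m, F x ≤ F (x + l)

section Balanced

variable [NeZero n] {X Y : Finset (Fin n)} {j : Fin n}

theorem shiftR_ofNat (x a : ℕ) : shiftR (Fin.ofNat n x) a = Fin.ofNat n (x + a) :=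
  Fin.ext (by simp [shiftR, Nat.mod_add_mod])

theorem mem_cycInterval_ofNat {x t : ℕ} :
    j ∈ cycInterval (Fin.ofNat n x) t ↔ ∃ a ≤ t, Fin.ofNat n (x + a) = j := by
  simp only [cycInterval, Finset.mem_image, Finset.mem_range, shiftR_ofNat, Nat.lt_succ_iff]

theorem card_cycInterval_inter (q : Finset (Fin n)) (x : ℕ) {l : ℕ} (hl : l < n) :
    ((cycInterval (Fin.ofNat n x) l ∩ q).card : ℤ) =
      ∑ s ∈ Finset.range (l + 1), ind q (x + s) := by
  have hinj : Set.InjOn (shiftR (Fin.ofNat n x)) (Finset.range (l + 1)) := by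
    intro a ha b hb hab
    simp only [shiftR_ofNat, Fin.ext_iff, Fin.val_ofNat] at hab
    have := Nat.ModEq.add_left_cancel' x hab
    simp only [Finset.coe_range, Set.mem_Iio] at ha hb
    rwa [Nat.ModEq, Nat.mod_eq_of_lt (by omega), Nat.mod_eq_of_lt (by omega)] at this
  rw [← Finset.filter_mem_eq_inter, Finset.card_filter, cycInterval, Finset.sum_image hinj]
  push_cast
  refine Finset.sum_congr rfl fun a _ => ?_
  rw [shiftR_ofNat]
  rfl

theorem balancedInterval_ofNat_iff {x t : ℕ} (ht : t < n) :
    BalancedInterval X Y (Fin.ofNat n x) t ↔ IsExcursion (height X Y) x (t + 1) := by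
  have key : ∀ l ≤ t, ((cycInterval (Fin.ofNat n x) l ∩ X).card : ℤ) -
      (cycInterval (Fin.ofNat n x) l ∩ Y).card = height X Y (x + (l + 1)) - height X Y x := by
    intro l hl
    rw [card_cycInterval_inter X x (by omega), card_cycInterval_inter Y x (by omega), height_add,
      ← Finset.sum_sub_distrib]
    ring
  constructor
  · rintro ⟨hc, hpre⟩
    refine ⟨by have := key t le_rfl; omega, ?_⟩
    rintro (_ | l) hl
    · simp
    · have := key l (by omega)
      have := hpre l (by omega)
      omega
  · rintro ⟨he, hpre⟩
    refine ⟨by have := key t le_rfl; omega, fun l hl => ?_⟩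
    have := key l hl
    have := hpre (l + 1) (by omega)
    omega

theorem balancedSite_iff : BalancedSite X Y j ↔
    ∃ x m a, m ≤ n ∧ a < m ∧ Fin.ofNat n (x + a) = j ∧ IsExcursion (height X Y) x m := by
  constructor
  · rintro ⟨i, t, ht, hI, hj⟩
    rw [← Fin.ofNat_val_eq_self i] at hI hj
    obtain ⟨a, ha, rfl⟩ := mem_cycInterval_ofNat.1 hj
    exact ⟨i, t + 1, a, ht, by omega, rfl, (balancedInterval_ofNat_iff ht).1 hI⟩
  · rintro ⟨x, m, a, hm, ha, rfl, hE⟩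
    refine ⟨Fin.ofNat n x, m - 1, by omega, (balancedInterval_ofNat_iff (by omega)).2 ?_,
      mem_cycInterval_ofNat.2 ⟨a, by omega, rfl⟩⟩
    rwa [Nat.sub_add_cancel (by omega)]

theorem BalancedSite.exists_height_le (hB : BalancedSite X Y j) :
    ∃ u, 1 ≤ u ∧ u ≤ n ∧ height X Y (j + u) ≤ height X Y j := by
  obtain ⟨x, m, a, hm, ha, rfl, he, hmin⟩ := balancedSite_iff.1 hB
  refine ⟨m - a, by omega, by omega, ?_⟩
  have hc := height_add_sub_congr (X := X) (Y := Y) (x := (Fin.ofNat n (x + a) : ℕ))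
    (y := x + a) (by simp) (m - a)
  rw [show x + a + (m - a) = x + m by omega, he] at hc
  linarith [hmin a ha.le]

theorem BalancedSite.exists_height_le' (hB : BalancedSite X Y j) :
    ∃ u, 1 ≤ u ∧ u ≤ n ∧ height X Y (j + n + 1 - u) ≤ height X Y (j + n + 1) := by
  obtain ⟨x, m, a, hm, ha, rfl, he, hmin⟩ := balancedSite_iff.1 hB
  set j : ℕ := (Fin.ofNat n (x + a) : ℕ) with hj
  have hy : (j + n - a) % n = x % n := by
    refine Nat.ModEq.add_right_cancel' a ?_
    rw [Nat.ModEq, Nat.sub_add_cancel (by omega), Nat.add_mod_right, hj, Fin.val_ofNat,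
      Nat.mod_mod]
  refine ⟨a + 1, by omega, by omega, ?_⟩
  have hc := height_add_sub_congr (X := X) (Y := Y) hy (a + 1)
  rw [show j + n + 1 - (a + 1) = j + n - a by omega, show j + n + 1 = j + n - a + (a + 1) by omega]
  linarith [hmin (a + 1) (by omega)]

theorem balancedSite_of_height_le (hrow : height X Y j ≤ height X Y (j + 1))
    (hex : ∃ u, 1 ≤ u ∧ u ≤ n ∧ height X Y (j + u) ≤ height X Y j) : BalancedSite X Y j := by
  -- the first return of the path to the level at `j` closes a balanced interval starting at `j`
  obtain ⟨hu₁, hun, hle⟩ := Nat.find_spec hex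
  set u := Nat.find hex
  have hlt : ∀ l, 1 ≤ l → l < u → height X Y j < height X Y (j + l) := fun l hl₁ hl₂ => by
    have := Nat.find_min hex hl₂
    push Not at this
    exact this hl₁ (by omega)
  have heq : height X Y (j + u) = height X Y j := by
    rcases Nat.lt_or_ge 1 u with h | h
    · have := hlt (u - 1) (by omega) (by omega)
      have := sub_one_le_height_succ (X := X) (Y := Y) (t := j + (u - 1))
      rw [show j + (u - 1) + 1 = j + u by omega] at this
      omega
    · rw [show u = 1 by omega] at hle ⊢
      omega
  refine balancedSite_iff.2 ⟨j, u, 0, hun, by omega, by simp, heq, fun l hl => ?_⟩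
  rcases Nat.eq_zero_or_pos l with rfl | hl₀
  · simp
  rcases Nat.eq_or_lt_of_le hl with rfl | hlu
  · exact heq.ge
  · exact (hlt l hl₀ hlu).le

theorem balancedSite_of_height_le' (hrow : height X Y (j + n + 1) ≤ height X Y (j + n))
    (hex : ∃ u, 1 ≤ u ∧ u ≤ n ∧ height X Y (j + n + 1 - u) ≤ height X Y (j + n + 1)) :
    BalancedSite X Y j := by
  -- the last visit before `j + n + 1` to the level there opens a balanced interval ending at `j`
  obtain ⟨hu₁, hun, hle⟩ := Nat.find_spec hex
  set u := Nat.find hex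
  set N := (j : ℕ) + n + 1
  have hlt : ∀ l, 1 ≤ l → l < u → height X Y N < height X Y (N - l) := fun l hl₁ hl₂ => by
    have := Nat.find_min hex hl₂
    push Not at this
    exact this hl₁ (by omega)
  have heq : height X Y (N - u) = height X Y N := by
    rcases Nat.lt_or_ge 1 u with h | h
    · have := hlt (u - 1) (by omega) (by omega)
      have := height_succ_le (X := X) (Y := Y) (t := N - u)
      rw [show N - u + 1 = N - (u - 1) by omega] at this
      omega
    · rw [show u = 1 by omega, show N - 1 = j + n by omega] at hle ⊢
      omega
  refine balancedSite_iff.2 ⟨N - u, u, u - 1, hun, by omega, ?_, ?_, fun l hl => ?_⟩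
  · rw [show N - u + (u - 1) = j + n by omega]
    exact Fin.ext (by simp [Nat.mod_eq_of_lt j.isLt])
  · rw [show N - u + u = N by omega, heq]
  · rcases Nat.eq_zero_or_pos l with rfl | hl₀
    · simp
    rcases Nat.eq_or_lt_of_le hl with rfl | hlu
    · rw [show N - u + u = N by omega, heq]
    · have := hlt (u - l) (by omega) (by omega)
      rw [show N - (u - l) = N - u + l by omega] at this
      linarith

end Balanced

section DualPair

variable [NeZero n] {X Y : Finset (Fin n)} {j : Fin n}

theorem not_balancedSite_iff_of_card_le (hd : Y.card ≤ X.card) :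
    ¬BalancedSite X Y j ↔ ∀ u, 1 ≤ u → u ≤ n → height X Y j < height X Y (j + u) := by
  have hF := quasiPeriodic_height (X := X) (Y := Y)
  have hd' : (Y.card : ℤ) ≤ X.card := by exact_mod_cast hd
  refine ⟨fun hB u hu₁ hu₂ => ?_, fun h hB => ?_⟩
  · by_contra hle
    push Not at hle
    apply hB
    rcases le_or_gt (height X Y j) (height X Y (j + 1)) with hrow | hrow
    · exact balancedSite_of_height_le hrow ⟨u, hu₁, hu₂, hle⟩
    · refine balancedSite_of_height_le' ?_ ⟨n, NeZero.pos n, le_rfl, ?_⟩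
      · rw [hF j, Nat.add_right_comm, hF]
        linarith
      · rw [show (j : ℕ) + n + 1 - n = j + 1 by omega, Nat.add_right_comm, hF]
        linarith
  · obtain ⟨u, hu₁, hu₂, hle⟩ := hB.exists_height_le
    exact (h u hu₁ hu₂).not_ge hle

theorem not_balancedSite_iff_of_card_ge (hd : X.card ≤ Y.card) :
    ¬BalancedSite X Y j ↔
      ∀ u, 1 ≤ u → u ≤ n → height X Y (j + n + 1) < height X Y (j + n + 1 - u) := by
  have hF := quasiPeriodic_height (X := X) (Y := Y)
  have hd' : (X.card : ℤ) ≤ Y.card := by exact_mod_cast hd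
  refine ⟨fun hB u hu₁ hu₂ => ?_, fun h hB => ?_⟩
  · by_contra hle
    push Not at hle
    apply hB
    rcases le_or_gt (height X Y (j + n + 1)) (height X Y (j + n)) with hrow | hrow
    · exact balancedSite_of_height_le' hrow ⟨u, hu₁, hu₂, hle⟩
    · refine balancedSite_of_height_le ?_ ⟨n, NeZero.pos n, le_rfl, ?_⟩
      · have := hF (j + 1)
        rw [Nat.add_right_comm] at this
        linarith [hF j]
      · rw [hF]
        linarith
  · obtain ⟨u, hu₁, hu₂, hle⟩ := hB.exists_height_le'
    exact (h u hu₁ hu₂).not_ge hle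

theorem windowMin_height_succ_sub_of_card_le (hd : Y.card ≤ X.card) (j : Fin n) :
    windowMin n (height X Y) (j + 1) - windowMin n (height X Y) j =
      if BalancedSite X Y j then 0 else 1 := by
  rw [quasiPeriodic_height.windowMin_succ_sub_of_nonneg (by simpa) (fun _ => height_succ_le) j]
  by_cases hB : BalancedSite X Y j
  · rw [if_pos hB, if_neg fun h => (not_balancedSite_iff_of_card_le hd).2 h hB]
  · rw [if_neg hB, if_pos ((not_balancedSite_iff_of_card_le hd).1 hB)]

theorem windowMin_height_succ_sub_of_card_ge (hd : X.card ≤ Y.card) (j : Fin n) :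
    windowMin n (height X Y) (j + 1) - windowMin n (height X Y) j =
      if BalancedSite X Y j then 0 else -1 := by
  rw [quasiPeriodic_height.windowMin_succ_sub_of_nonpos (by simpa)
    (fun _ => sub_one_le_height_succ) j]
  by_cases hB : BalancedSite X Y j
  · rw [if_pos hB, if_neg fun h => (not_balancedSite_iff_of_card_ge hd).2 h hB]
  · rw [if_neg hB, if_pos ((not_balancedSite_iff_of_card_ge hd).1 hB)]

theorem windowMin_height_succ_sub_val (j : Fin n) :
    windowMin n (height X Y) (j + 1) - windowMin n (height X Y) j =
      if BalancedSite X Y j then 0 else ind X j - ind Y j := by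
  have := ind_eq_zero_or_one X j
  have := ind_eq_zero_or_one Y j
  rcases le_total Y.card X.card with hd | hd
  · rw [windowMin_height_succ_sub_of_card_le hd]
    split_ifs with hB
    · rfl
    · have := (not_balancedSite_iff_of_card_le hd).1 hB 1 le_rfl (NeZero.pos n)
      rw [height_succ] at this
      omega
  · rw [windowMin_height_succ_sub_of_card_ge hd]
    split_ifs with hB
    · rfl
    · have := (not_balancedSite_iff_of_card_ge hd).1 hB 1 le_rfl (NeZero.pos n)
      rw [Nat.add_sub_cancel, height_succ, ind_add_n, ind_add_n] at this
      omega

theorem windowMin_height_succ_sub (t : ℕ) :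
    windowMin n (height X Y) (t + 1) - windowMin n (height X Y) t =
      if BalancedSite X Y (Fin.ofNat n t) then 0 else ind X t - ind Y t := by
  have ht : t % n = (Fin.ofNat n t : ℕ) % n := by simp
  have h₀ := windowMin_height_sub_congr (X := X) (Y := Y) ht
  have h₁ := windowMin_height_sub_congr (X := X) (Y := Y) (Nat.ModEq.add_right 1 ht)
  have hval := windowMin_height_succ_sub_val (X := X) (Y := Y) (Fin.ofNat n t)
  rw [← ind_congr X ht, ← ind_congr Y ht] at hval
  have e₀ := height_succ (X := X) (Y := Y) (t := t)
  have e₁ := height_succ (X := X) (Y := Y) (t := (Fin.ofNat n t : ℕ))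
  rw [← ind_congr X ht, ← ind_congr Y ht] at e₁
  linarith

theorem mem_dualPair_fst : j ∈ (dualPair X Y).1 ↔ if BalancedSite X Y j then j ∈ X else j ∈ Y := by
  simp [dualPair]

theorem mem_dualPair_snd : j ∈ (dualPair X Y).2 ↔ if BalancedSite X Y j then j ∈ Y else j ∈ X := by
  simp [dualPair]

theorem ind_dualPair_fst (t : ℕ) : ind (dualPair X Y).1 t =
    ind X t - (windowMin n (height X Y) (t + 1) - windowMin n (height X Y) t) := by
  rw [windowMin_height_succ_sub]
  by_cases hB : BalancedSite X Y (Fin.ofNat n t)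
  · simp only [ind, mem_dualPair_fst, if_pos hB, sub_zero]
  · simp only [ind, mem_dualPair_fst, if_neg hB]
    ring

theorem ind_dualPair_snd (t : ℕ) : ind (dualPair X Y).2 t =
    ind Y t + (windowMin n (height X Y) (t + 1) - windowMin n (height X Y) t) := by
  rw [windowMin_height_succ_sub]
  by_cases hB : BalancedSite X Y (Fin.ofNat n t)
  · simp only [ind, mem_dualPair_snd, if_pos hB, add_zero]
  · simp only [ind, mem_dualPair_snd, if_neg hB]
    ring

theorem sum_range_windowMin_height_succ_sub :
    ∑ s ∈ Finset.range n, (windowMin n (height X Y) (s + 1) - windowMin n (height X Y) s) =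
      X.card - Y.card := by
  have := quasiPeriodic_windowMin (quasiPeriodic_height (X := X) (Y := Y)) 0
  rw [zero_add] at this
  rw [Finset.sum_range_sub, this]
  ring

theorem card_dualPair_fst : (dualPair X Y).1.card = Y.card := by
  have h := sum_range_ind (dualPair X Y).1
  simp only [ind_dualPair_fst] at h
  rw [Finset.sum_sub_distrib, sum_range_ind, sum_range_windowMin_height_succ_sub] at h
  omega

theorem card_dualPair_snd : (dualPair X Y).2.card = X.card := by
  have h := sum_range_ind (dualPair X Y).2
  simp only [ind_dualPair_snd] at h
  rw [Finset.sum_add_distrib, sum_range_ind, sum_range_windowMin_height_succ_sub] at h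
  omega

theorem height_dualPair (t : ℕ) : height (dualPair X Y).1 (dualPair X Y).2 t =
    height X Y t - 2 * (windowMin n (height X Y) t - windowMin n (height X Y) 0) := by
  induction t with
  | zero => simp [height_zero]
  | succ t ih => rw [height_succ, ih, height_succ, ind_dualPair_fst, ind_dualPair_snd]; ring

theorem BalancedSite.dualPair (hB : BalancedSite X Y j) :
    BalancedSite (dualPair X Y).1 (dualPair X Y).2 j := by
  obtain ⟨x, m, a, hm, ha, hj, he, hmin⟩ := balancedSite_iff.1 hB
  have hK : ∀ l ≤ m, windowMin n (height X Y) (x + l) = windowMin n (height X Y) x := by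
    intro l hl
    induction l with
    | zero => rfl
    | succ l ih =>
      have hBl : BalancedSite X Y (Fin.ofNat n (x + l)) :=
        balancedSite_iff.2 ⟨x, m, l, hm, by omega, rfl, he, hmin⟩
      have := windowMin_height_succ_sub (X := X) (Y := Y) (x + l)
      rw [if_pos hBl] at this
      rw [← Nat.add_assoc]
      linarith [ih (by omega)]
  refine balancedSite_iff.2 ⟨x, m, a, hm, ha, hj, ?_, fun l hl => ?_⟩
  · rw [height_dualPair, height_dualPair, hK m le_rfl, he]
  · rw [height_dualPair, height_dualPair, hK l hl]
    linarith [hmin l hl]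

theorem card_filter_not_balancedSite :
    ((Finset.univ.filter fun j => ¬BalancedSite X Y j).card : ℤ) = |(X.card : ℤ) - Y.card| := by
  have hsum := sum_range_windowMin_height_succ_sub (X := X) (Y := Y)
  rw [← Fin.sum_univ_eq_sum_range
    (fun s => windowMin n (height X Y) (s + 1) - windowMin n (height X Y) s)] at hsum
  rw [Finset.card_filter]
  push_cast
  rcases le_total Y.card X.card with hd | hd
  · rw [abs_of_nonneg (by simpa), ← hsum]
    refine Finset.sum_congr rfl fun j _ => ?_
    rw [windowMin_height_succ_sub_of_card_le hd]
    split_ifs <;> rfl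
  · rw [abs_of_nonpos (by simpa), ← hsum, ← Finset.sum_neg_distrib]
    refine Finset.sum_congr rfl fun j _ => ?_
    rw [windowMin_height_succ_sub_of_card_ge hd]
    split_ifs <;> rfl

theorem balancedSite_dualPair_iff :
    BalancedSite (dualPair X Y).1 (dualPair X Y).2 j ↔ BalancedSite X Y j := by
  set U' := Finset.univ.filter fun j => ¬BalancedSite (dualPair X Y).1 (dualPair X Y).2 j
  set U := Finset.univ.filter fun j => ¬BalancedSite X Y j
  have hsub : U' ⊆ U := fun j => by
    simpa [U, U'] using mt BalancedSite.dualPair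
  have hcard : (U'.card : ℤ) = U.card := by
    rw [card_filter_not_balancedSite, card_filter_not_balancedSite, card_dualPair_fst,
      card_dualPair_snd, abs_sub_comm]
  have heq := Finset.eq_of_subset_of_card_le hsub (by exact_mod_cast hcard.ge)
  refine ⟨fun h => by_contra fun hB => ?_, BalancedSite.dualPair⟩
  have : j ∈ U := by simp [U, hB]
  rw [← heq] at this
  simp [U'] at this
  exact this h

theorem dualPair_dualPair : dualPair (dualPair X Y).1 (dualPair X Y).2 = (X, Y) := by
  refine Prod.ext (Finset.ext fun j => ?_) (Finset.ext fun j => ?_) <;>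
    by_cases hB : BalancedSite X Y j <;>
    simp [mem_dualPair_fst, mem_dualPair_snd, balancedSite_dualPair_iff, hB]

end DualPair

section TropicalBraid

variable {d e : ℤ} {F G : ℕ → ℤ}

theorem quasiPeriodic_sub_two_mul_windowMin_add (hF : QuasiPeriodic n d F)
    (hG : QuasiPeriodic n e G) :
    QuasiPeriodic n e (F - 2 * windowMin n F + windowMin n (G + windowMin n F)) := fun t => by
  have hP := quasiPeriodic_windowMin hF
  have hD := quasiPeriodic_windowMin (hG.add hP)
  simp only [Pi.add_apply, Pi.sub_apply, Pi.mul_apply, Pi.ofNat_apply, hF t, hP t, hD t]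
  ring

variable [NeZero n]

theorem QuasiPeriodic.exists_eq_windowMin (hF : QuasiPeriodic n d F) (hd : 0 ≤ d)
    (hstep : ∀ s, F (s + 1) ≤ F s + 1) {s u : ℕ} (hsu : s ≤ u) (hs : F s ≤ windowMin n F u) :
    ∃ x, s ≤ x ∧ x ≤ u ∧ F x = windowMin n F u ∧ windowMin n F x = windowMin n F u := by
  classical
  let P := fun x => s ≤ x ∧ F x ≤ windowMin n F u
  obtain ⟨hsx, hx⟩ : P (Nat.findGreatest P u) := Nat.findGreatest_spec hsu ⟨le_rfl, hs⟩
  set x := Nat.findGreatest P u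
  have hxu : x ≤ u := Nat.findGreatest_le u
  have hgt : ∀ r, x < r → r ≤ u → windowMin n F u < F r := fun r h₁ h₂ => by
    have := Nat.findGreatest_is_greatest h₁ h₂
    simp only [P, not_and, not_le] at this
    exact this (by omega)
  have hFx : F x = windowMin n F u := by
    rcases Nat.eq_or_lt_of_le hxu with h | h
    · exact le_antisymm hx (h ▸ windowMin_le le_rfl (by omega))
    · linarith [hgt (x + 1) (by omega) h, hstep x]
  refine ⟨x, hsx, hxu, hFx, le_antisymm (hFx ▸ windowMin_le le_rfl (by omega)) ?_⟩
  refine (hF.le_windowMin_iff hd).2 fun r hr => ?_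
  rcases Nat.eq_or_lt_of_le hr with rfl | hr
  · exact hFx.ge
  rcases le_or_gt r u with hru | hru
  · exact (hgt r hr hru).le
  · exact hF.windowMin_le_of_le hd hru.le

theorem windowMin_add_windowMin_le (hF : QuasiPeriodic n d F) (hG : QuasiPeriodic n e G)
    (hd : 0 ≤ d) (he : 0 ≤ e) {t s u : ℕ} (hts : t ≤ s) (hsu : s ≤ u) :
    windowMin n (F + windowMin n G) t ≤ F s + G u := by
  have h₁ := (hF.add (quasiPeriodic_windowMin hG)).windowMin_le_of_le (by omega) hts
  have h₂ := hG.windowMin_le_of_le he hsu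
  exact h₁.trans (add_le_add_right h₂ _)

theorem windowMin_add_windowMin_le_add (hF : QuasiPeriodic n d F) (hG : QuasiPeriodic n e G)
    (hd : 0 ≤ d) (he : 0 ≤ e) (t : ℕ) :
    windowMin n (F + windowMin n G) t ≤ windowMin n F t +
      windowMin n (F - 2 * windowMin n F + windowMin n (G + windowMin n F)) t := by
  set P := windowMin n F
  have hPF : ∀ {x y}, x ≤ y → P x ≤ F y := fun h => hF.windowMin_le_of_le hd h
  obtain ⟨x, htx, -, hUx⟩ := exists_windowMin_eq (n := n) (F - 2 * P + windowMin n (G + P)) t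
  obtain ⟨w, hxw, -, hDw⟩ := exists_windowMin_eq (n := n) (G + P) x
  obtain ⟨v, hwv, -, hPv⟩ := exists_windowMin_eq (n := n) F w
  obtain ⟨σ, htσ, -, hPσ⟩ := exists_windowMin_eq (n := n) F t
  rw [hUx]
  change _ ≤ P t + (F x - 2 * P x + windowMin n (G + P) x)
  rw [show windowMin n (G + P) x = G w + P w from hDw]
  have hPxv : P x ≤ F v := hPF (by omega)
  rcases le_or_gt σ w with hσw | hσw
  · have := windowMin_add_windowMin_le hF hG hd he htσ hσw
    linarith [hPF (le_refl x)]
  · have hPx : P x = P t :=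
      le_antisymm ((hPF (show x ≤ σ by omega)).trans_eq hPσ.symm) (hF.windowMin_mono hd htx)
    have := windowMin_add_windowMin_le hF hG hd he htx hxw
    linarith [hPF (show t ≤ v by omega)]

theorem add_le_windowMin_add_windowMin (hF : QuasiPeriodic n d F) (hG : QuasiPeriodic n e G)
    (hd : 0 ≤ d) (he : 0 ≤ e) (hstep : ∀ s, F (s + 1) ≤ F s + 1) (t : ℕ) :
    windowMin n F t + windowMin n (F - 2 * windowMin n F + windowMin n (G + windowMin n F)) t ≤
      windowMin n (F + windowMin n G) t := by
  set P := windowMin n F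
  set D := windowMin n (G + P)
  have hPF : ∀ {x y}, x ≤ y → P x ≤ F y := fun h => hF.windowMin_le_of_le hd h
  have hU : ∀ x, t ≤ x → windowMin n (F - 2 * P + D) t ≤ F x - 2 * P x + D x := fun x h =>
    (quasiPeriodic_sub_two_mul_windowMin_add hF hG).windowMin_le_of_le he h
  obtain ⟨s, hts, -, hEs⟩ := exists_windowMin_eq (n := n) (F + windowMin n G) t
  obtain ⟨u, hsu, -, hGu⟩ := exists_windowMin_eq (n := n) G s
  have hD : ∀ x, x ≤ u → D x ≤ G u + P u := fun x h =>
    (hG.add (quasiPeriodic_windowMin hF)).windowMin_le_of_le (by omega) h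
  have hE : windowMin n (F + windowMin n G) t = F s + G u := by rw [hEs, Pi.add_apply, hGu]
  have hFmin : ∀ r, t ≤ r → r ≤ u → F s ≤ F r := fun r h₁ h₂ => by
    linarith [windowMin_add_windowMin_le hF hG hd he h₁ h₂]
  rw [hE]
  rcases le_or_gt (P u) (F s) with hus | hsu'
  · have hPs : P s = P u := by
      refine le_antisymm (hF.windowMin_mono hd hsu) ((hF.le_windowMin_iff hd).2 fun r hr => ?_)
      rcases le_or_gt r u with hru | hru
      · exact hus.trans (hFmin r (by omega) hru)
      · exact hPF hru.le
    linarith [hU s hts, hD s hsu, hF.windowMin_mono hd (hts.trans hsu)]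
  · have hPt : P t = F s := by
      refine le_antisymm (hPF hts) ((hF.le_windowMin_iff hd).2 fun r hr => ?_)
      rcases le_or_gt r u with hru | hru
      · exact hFmin r hr hru
      · exact hsu'.le.trans (hPF hru.le)
    obtain ⟨x, hsx, hxu, hFx, hPx⟩ := hF.exists_eq_windowMin hd hstep hsu hsu'.le
    linarith [hU x (by omega), hD x hxu]

/-- With nonnegative drifts `windowMin` is a future minimum, so the left side at `t` is the least
value of `F s + G u` over `t ≤ s ≤ u`. -/
theorem windowMin_add_windowMin (hF : QuasiPeriodic n d F) (hG : QuasiPeriodic n e G)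
    (hd : 0 ≤ d) (he : 0 ≤ e) (hstep : ∀ s, F (s + 1) ≤ F s + 1) :
    windowMin n (F + windowMin n G) = windowMin n F +
      windowMin n (F - 2 * windowMin n F + windowMin n (G + windowMin n F)) :=
  funext fun t => le_antisymm (windowMin_add_windowMin_le_add hF hG hd he t)
    (add_le_windowMin_add_windowMin hF hG hd he hstep t)

end TropicalBraid

def tropLeft (n : ℕ) (f : (ℕ → ℤ) × (ℕ → ℤ) × (ℕ → ℤ)) : (ℕ → ℤ) × (ℕ → ℤ) × (ℕ → ℤ) :=
  (f.1 - windowMin n (f.1 - f.2.1), f.2.1 + windowMin n (f.1 - f.2.1), f.2.2)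

def tropRight (n : ℕ) (f : (ℕ → ℤ) × (ℕ → ℤ) × (ℕ → ℤ)) : (ℕ → ℤ) × (ℕ → ℤ) × (ℕ → ℤ) :=
  (f.1, f.2.1 - windowMin n (f.2.1 - f.2.2), f.2.2 + windowMin n (f.2.1 - f.2.2))

theorem tropLeft_tropRight_tropLeft [NeZero n] {a b c : ℕ → ℤ} {d e : ℤ}
    (hF : QuasiPeriodic n d (a - b)) (hG : QuasiPeriodic n e (b - c)) (hd : 0 ≤ d) (he : 0 ≤ e)
    (hFs : ∀ s, (a - b) (s + 1) ≤ (a - b) s + 1) (hGs : ∀ s, (b - c) (s + 1) ≤ (b - c) s + 1) :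
    tropLeft n (tropRight n (tropLeft n (a, b, c))) =
      tropRight n (tropLeft n (tropRight n (a, b, c))) := by
  have h₁ := windowMin_add_windowMin hF hG hd he hFs
  have h₂ := windowMin_add_windowMin hG hF he hd hGs
  simp only [tropLeft, tropRight]
  rw [show b + windowMin n (a - b) - c = b - c + windowMin n (a - b) by ring,
    show a - (b - windowMin n (b - c)) = a - b + windowMin n (b - c) by ring]
  rw [show a - windowMin n (a - b) - (b + windowMin n (a - b) -
      windowMin n (b - c + windowMin n (a - b))) =
      a - b - 2 * windowMin n (a - b) + windowMin n (b - c + windowMin n (a - b)) by ring,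
    show b - windowMin n (b - c) + windowMin n (a - b + windowMin n (b - c)) -
      (c + windowMin n (b - c)) =
      b - c - 2 * windowMin n (b - c) + windowMin n (a - b + windowMin n (b - c)) by ring]
  refine Prod.ext ?_ (Prod.ext ?_ ?_)
  · linear_combination h₁
  · linear_combination -h₁ - h₂
  · linear_combination h₂

section Counting

variable [NeZero n] {X Y : Finset (Fin n)} {α β : ℕ → ℤ}

def IsCounting (q : Finset (Fin n)) (α : ℕ → ℤ) : Prop := ∀ t, α (t + 1) = α t + ind q t

theorem exists_isCounting (q : Finset (Fin n)) : ∃ α, IsCounting q α :=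
  ⟨fun t => ∑ s ∈ Finset.range t, ind q s, fun t => Finset.sum_range_succ _ t⟩

theorem IsCounting.unique (hX : IsCounting X α) (hY : IsCounting Y α) : X = Y :=
  eq_of_ind_eq fun t => by linarith [hX t, hY t]

theorem IsCounting.sub_eq (hα : IsCounting X α) (hβ : IsCounting Y β) (t : ℕ) :
    (α - β) t = height X Y t + (α 0 - β 0) := by
  induction t with
  | zero => simp [height_zero]
  | succ t ih =>
    simp only [Pi.sub_apply] at ih ⊢
    rw [hα, hβ, height_succ]
    linarith

theorem IsCounting.quasiPeriodic_sub (hα : IsCounting X α) (hβ : IsCounting Y β) :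
    QuasiPeriodic n (X.card - Y.card) (α - β) := fun t => by
  rw [hα.sub_eq hβ, hα.sub_eq hβ, quasiPeriodic_height]
  ring

theorem IsCounting.sub_succ_le (hα : IsCounting X α) (hβ : IsCounting Y β) (t : ℕ) :
    (α - β) (t + 1) ≤ (α - β) t + 1 := by
  rw [hα.sub_eq hβ, hα.sub_eq hβ]
  linarith [height_succ_le (X := X) (Y := Y) (t := t)]

theorem IsCounting.dualPair (hα : IsCounting X α) (hβ : IsCounting Y β) :
    IsCounting (dualPair X Y).1 (α - windowMin n (α - β)) ∧
      IsCounting (dualPair X Y).2 (β + windowMin n (α - β)) := by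
  have hK : ∀ t, windowMin n (α - β) t = windowMin n (height X Y) t + (α 0 - β 0) :=
    windowMin_eq_add_of_eq_add (hα.sub_eq hβ)
  refine ⟨fun t => ?_, fun t => ?_⟩
  · simp only [Pi.sub_apply, hK, hα t, ind_dualPair_fst]
    ring
  · simp only [Pi.add_apply, hK, hβ t, ind_dualPair_snd]
    ring

end Counting

section Triples

variable [NeZero n]

noncomputable def dualLeft (p : Finset (Fin n) × Finset (Fin n) × Finset (Fin n)) :
    Finset (Fin n) × Finset (Fin n) × Finset (Fin n) :=
  ((dualPair p.1 p.2.1).1, (dualPair p.1 p.2.1).2, p.2.2)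

noncomputable def dualRight (p : Finset (Fin n) × Finset (Fin n) × Finset (Fin n)) :
    Finset (Fin n) × Finset (Fin n) × Finset (Fin n) :=
  (p.1, (dualPair p.2.1 p.2.2).1, (dualPair p.2.1 p.2.2).2)

def IsCountingTriple (p : Finset (Fin n) × Finset (Fin n) × Finset (Fin n))
    (f : (ℕ → ℤ) × (ℕ → ℤ) × (ℕ → ℤ)) : Prop :=
  IsCounting p.1 f.1 ∧ IsCounting p.2.1 f.2.1 ∧ IsCounting p.2.2 f.2.2

variable {p p' : Finset (Fin n) × Finset (Fin n) × Finset (Fin n)}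
  {f : (ℕ → ℤ) × (ℕ → ℤ) × (ℕ → ℤ)}

theorem IsCountingTriple.dualLeft (h : IsCountingTriple p f) :
    IsCountingTriple (dualLeft p) (tropLeft n f) :=
  ⟨(h.1.dualPair h.2.1).1, (h.1.dualPair h.2.1).2, h.2.2⟩

theorem IsCountingTriple.dualRight (h : IsCountingTriple p f) :
    IsCountingTriple (dualRight p) (tropRight n f) :=
  ⟨h.1, (h.2.1.dualPair h.2.2).1, (h.2.1.dualPair h.2.2).2⟩

theorem IsCountingTriple.unique (h : IsCountingTriple p f) (h' : IsCountingTriple p' f) :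
    p = p' :=
  Prod.ext (h.1.unique h'.1) (Prod.ext (h.2.1.unique h'.2.1) (h.2.2.unique h'.2.2))

theorem dualLeft_dualLeft (p : Finset (Fin n) × Finset (Fin n) × Finset (Fin n)) :
    dualLeft (dualLeft p) = p := by
  simp only [dualLeft, dualPair_dualPair]

theorem dualRight_dualRight (p : Finset (Fin n) × Finset (Fin n) × Finset (Fin n)) :
    dualRight (dualRight p) = p := by
  simp only [dualRight, dualPair_dualPair]

theorem dualLeft_dualRight_dualLeft_of_card_le (h₁ : p.2.1.card ≤ p.1.card)
    (h₂ : p.2.2.card ≤ p.2.1.card) :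
    dualLeft (dualRight (dualLeft p)) = dualRight (dualLeft (dualRight p)) := by
  obtain ⟨A, B, C⟩ := p
  obtain ⟨a, ha⟩ := exists_isCounting A
  obtain ⟨b, hb⟩ := exists_isCounting B
  obtain ⟨c, hc⟩ := exists_isCounting C
  have hf : IsCountingTriple (A, B, C) (a, b, c) := ⟨ha, hb, hc⟩
  refine hf.dualLeft.dualRight.dualLeft.unique ?_
  rw [tropLeft_tropRight_tropLeft (ha.quasiPeriodic_sub hb) (hb.quasiPeriodic_sub hc)
    (sub_nonneg.2 (by exact_mod_cast h₁)) (sub_nonneg.2 (by exact_mod_cast h₂))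
    (ha.sub_succ_le hb) (hb.sub_succ_le hc)]
  exact hf.dualRight.dualLeft.dualRight

theorem braid_of_braid_dualLeft
    (h : dualLeft (dualRight (dualLeft (dualLeft p))) =
      dualRight (dualLeft (dualRight (dualLeft p)))) :
    dualLeft (dualRight (dualLeft p)) = dualRight (dualLeft (dualRight p)) := by
  rw [dualLeft_dualLeft] at h
  have := congrArg dualRight h
  rwa [dualRight_dualRight, eq_comm] at this

theorem braid_of_braid_dualRight
    (h : dualLeft (dualRight (dualLeft (dualRight p))) =
      dualRight (dualLeft (dualRight (dualRight p)))) :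
    dualLeft (dualRight (dualLeft p)) = dualRight (dualLeft (dualRight p)) := by
  rw [dualRight_dualRight] at h
  have := congrArg dualLeft h
  rwa [dualLeft_dualLeft, eq_comm] at this

/-- `dualLeft` and `dualRight` permute the three cardinalities, and a braid relation at one
point of an orbit gives it at all others; so it suffices to treat weakly decreasing
cardinalities. -/
theorem dualLeft_dualRight_dualLeft (p : Finset (Fin n) × Finset (Fin n) × Finset (Fin n)) :
    dualLeft (dualRight (dualLeft p)) = dualRight (dualLeft (dualRight p)) := by
  obtain ⟨A, B, C⟩ := p
  rcases le_total B.card A.card with hab | hab <;> rcases le_total C.card B.card with hbc | hbc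
  · exact dualLeft_dualRight_dualLeft_of_card_le hab hbc
  · rcases le_total C.card A.card with hac | hac
    · refine braid_of_braid_dualRight (dualLeft_dualRight_dualLeft_of_card_le ?_ ?_) <;>
        simp only [dualRight, card_dualPair_fst, card_dualPair_snd] <;> omega
    · refine braid_of_braid_dualRight (braid_of_braid_dualLeft
        (dualLeft_dualRight_dualLeft_of_card_le ?_ ?_)) <;>
        simp only [dualLeft, dualRight, card_dualPair_fst, card_dualPair_snd] <;> omega
  · rcases le_total C.card A.card with hac | hac
    · refine braid_of_braid_dualLeft (dualLeft_dualRight_dualLeft_of_card_le ?_ ?_) <;>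
        simp only [dualLeft, card_dualPair_fst, card_dualPair_snd] <;> omega
    · refine braid_of_braid_dualLeft (braid_of_braid_dualRight
        (dualLeft_dualRight_dualLeft_of_card_le ?_ ?_)) <;>
        simp only [dualLeft, dualRight, card_dualPair_fst, card_dualPair_snd] <;> omega
  · refine braid_of_braid_dualLeft (braid_of_braid_dualRight (braid_of_braid_dualLeft
      (dualLeft_dualRight_dualLeft_of_card_le ?_ ?_))) <;>
      simp only [dualLeft, dualRight, card_dualPair_fst, card_dualPair_snd] <;> omega

end Triples

section Tuples

variable {α : Type*} {k : ℕ}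

def triple (qs : Fin k → α) (e : ℕ) (h : e + 2 < k) : α × α × α :=
  (qs ⟨e, by omega⟩, qs ⟨e + 1, by omega⟩, qs ⟨e + 2, h⟩)

def withTriple (qs : Fin k → α) (e : ℕ) (p : α × α × α) : Fin k → α := fun j =>
  if j.val = e then p.1 else if j.val = e + 1 then p.2.1 else if j.val = e + 2 then p.2.2
  else qs j

theorem triple_withTriple (qs : Fin k → α) {e : ℕ} (h : e + 2 < k) (p : α × α × α) :
    triple (withTriple qs e p) e h = p := by
  simp [triple, withTriple]

theorem withTriple_withTriple (qs : Fin k → α) (e : ℕ) (p p' : α × α × α) :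
    withTriple (withTriple qs e p) e p' = withTriple qs e p' := by
  funext j
  simp only [withTriple]
  split_ifs <;> rfl

theorem sOp_eq_withTriple_dualLeft [NeZero n] {e : ℕ} (h : e + 2 < k)
    (qs : Fin k → Finset (Fin n)) : sOp e qs = withTriple qs e (dualLeft (triple qs e h)) := by
  funext j
  simp only [sOp, withTriple, dualLeft, triple, dif_pos (show e + 1 < k by omega)]
  split_ifs <;> first | rfl | (congr 1; ext; omega)

theorem sOp_succ_eq_withTriple_dualRight [NeZero n] {e : ℕ} (h : e + 2 < k)
    (qs : Fin k → Finset (Fin n)) :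
    sOp (e + 1) qs = withTriple qs e (dualRight (triple qs e h)) := by
  funext j
  simp only [sOp, withTriple, dualRight, triple, dif_pos h]
  split_ifs <;> first | rfl | omega | (congr 1; ext; omega)

end Tuples

/-- `i` is one-indexed: `s_i` is `sOp (i - 1)`, acting on the zero-indexed positions
`(i - 1, i)`. -/
theorem braid_relation {n k : ℕ} [NeZero n] (qs : Fin k → Finset (Fin n)) (i : ℕ)
    (h1 : 1 ≤ i) (h2 : i ≤ k - 2) :
    sOp (i - 1) (sOp i (sOp (i - 1) qs)) = sOp i (sOp (i - 1) (sOp i qs)) := by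
  obtain ⟨e, rfl⟩ : ∃ e, i = e + 1 := ⟨i - 1, by omega⟩
  have h : e + 2 < k := by omega
  simp only [Nat.add_sub_cancel, sOp_eq_withTriple_dualLeft h, sOp_succ_eq_withTriple_dualRight h,
    triple_withTriple, withTriple_withTriple, dualLeft_dualRight_dualLeft]

end MLQ
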